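/- arXiv:2408.07621 — 3 statements merged into one kernel-verified Lean document; each statement's English description precedes it below -/
import Mathlib

section
/- Let H(z) = Σ H_i z^i be a parity-check matrix of a non-catastrophic convolutional code C with generator matrix G(z) = Σ G_i z^i, and assume H_0 has full row rank. Then for every γ ≥ 0 the sliding parity-check matrix H̃_0^γ (lower block-triangular Toeplitz with blocks H_0,…,H_γ) satisfies H̃_0^γ (G̃_0^γ)^T = 0, and H̃_0^γ is a parity-check matrix of the block code generated by the sliding generator matrix G̃_0^γ. -/
open Matrix Finset

private lemma conv_aux {F : Type*} [Field F] {γ : ℕ} (p q : Polynomial F) (a b : Fin (γ+1)) :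
    ∑ c : Fin (γ+1), (if (c:ℕ) ≤ (a:ℕ) then p.coeff ((a:ℕ) - (c:ℕ)) else 0) *
      (if (b:ℕ) ≤ (c:ℕ) then q.coeff ((c:ℕ) - (b:ℕ)) else 0)
    = if (b:ℕ) ≤ (a:ℕ) then (p*q).coeff ((a:ℕ) - (b:ℕ)) else 0 := by
  rw [Fin.sum_univ_eq_sum_range (fun c => (if c ≤ (a:ℕ) then p.coeff ((a:ℕ) - c) else 0) *
      (if (b:ℕ) ≤ c then q.coeff (c - (b:ℕ)) else 0))]
  by_cases hba : (b:ℕ) ≤ (a:ℕ)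
  · rw [if_pos hba]
    have h1 : ∀ c ∈ Finset.range (γ+1),
        (if c ≤ (a:ℕ) then p.coeff ((a:ℕ) - c) else 0) *
          (if (b:ℕ) ≤ c then q.coeff (c - (b:ℕ)) else 0)
        = if (b:ℕ) ≤ c ∧ c ≤ (a:ℕ) then p.coeff ((a:ℕ) - c) * q.coeff (c - (b:ℕ)) else 0 := by
      intro c _
      by_cases h : c ≤ (a:ℕ) <;> by_cases h' : (b:ℕ) ≤ c <;> simp [h, h']
    rw [Finset.sum_congr rfl h1, ← Finset.sum_filter]
    have h2 : (Finset.range (γ+1)).filter (fun c => (b:ℕ) ≤ c ∧ c ≤ (a:ℕ))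
        = Finset.Ico (b:ℕ) ((a:ℕ)+1) := by
      ext c
      have := a.isLt
      simp only [Finset.mem_filter, Finset.mem_range, Finset.mem_Ico]
      omega
    rw [h2, Finset.sum_Ico_eq_sum_range]
    have h3 : (a:ℕ) + 1 - (b:ℕ) = ((a:ℕ) - (b:ℕ)) + 1 := by omega
    rw [h3, mul_comm p q, Polynomial.coeff_mul,
      Finset.Nat.sum_antidiagonal_eq_sum_range_succ_mk]
    refine Finset.sum_congr rfl fun d hd => ?_
    simp only [Finset.mem_range] at hd
    have e1 : (a:ℕ) - ((b:ℕ) + d) = (a:ℕ) - (b:ℕ) - d := by omega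
    have e2 : (b:ℕ) + d - (b:ℕ) = d := by omega
    rw [e1, e2, mul_comm]
  · rw [if_neg hba]
    refine Finset.sum_eq_zero fun c _ => ?_
    by_cases h : c ≤ (a:ℕ)
    · have : ¬ (b:ℕ) ≤ c := by omega
      simp [this]
    · simp [h]

/-- The sliding parity-check matrix H̃₀^γ satisfies H̃₀^γ (G̃₀^γ)ᵀ = 0 and is a
parity-check matrix of the block code generated by the sliding generator matrix G̃₀^γ. -/
theorem stmt10 {F : Type*} [Field F] [Fintype F] {k n : ℕ} (hkn : k ≤ n)
    (G : Matrix (Fin k) (Fin n) (Polynomial F))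
    (H : Matrix (Fin (n - k)) (Fin n) (Polynomial F))
    (hGrank : LinearIndependent (Polynomial F) (fun i => G i))
    (hHrank : LinearIndependent (Polynomial F) (fun i => H i))
    (hker : ∀ c : Fin n → Polynomial F, (∃ m, m ᵥ* G = c) ↔ H *ᵥ c = 0)
    (hH0 : ((H.map fun p => p.coeff 0).rank) = n - k)
    (γ : ℕ)
    (Gs : Matrix (Fin (γ + 1) × Fin k) (Fin (γ + 1) × Fin n) F)
    (hGs : ∀ a i b j, Gs (a, i) (b, j) =
        if (a : ℕ) ≤ (b : ℕ) then (G i j).coeff ((b : ℕ) - (a : ℕ)) else 0)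
    (Hs : Matrix (Fin (γ + 1) × Fin (n - k)) (Fin (γ + 1) × Fin n) F)
    (hHs : ∀ a i b j, Hs (a, i) (b, j) =
        if (b : ℕ) ≤ (a : ℕ) then (H i j).coeff ((a : ℕ) - (b : ℕ)) else 0) :
    Hs * Gs.transpose = 0 ∧
    Hs.rank = (n - k) * (γ + 1) ∧
    ∀ v : Fin (γ + 1) × Fin n → F, Hs *ᵥ v = 0 ↔ ∃ mm, mm ᵥ* Gs = v := by
  classical
  -- rows of G are codewords
  have hrow : ∀ r : Fin k, H *ᵥ (fun j => G r j) = 0 := by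
    intro r
    refine (hker _).mp ⟨Pi.single r 1, ?_⟩
    ext j
    simp [vecMul, dotProduct, Pi.single_apply]
  have HGt : ∀ i j, (∑ l, H i l * G j l) = 0 := by
    intro i j
    have := congr_fun (hrow j) i
    simpa [mulVec, dotProduct] using this
  have part1 : Hs * Gs.transpose = 0 := by
    ext ⟨a, i⟩ ⟨b, j⟩
    rw [Matrix.mul_apply]
    simp only [Matrix.transpose_apply, Matrix.zero_apply]
    rw [Fintype.sum_prod_type]
    calc ∑ c : Fin (γ+1), ∑ l, Hs (a,i) (c,l) * Gs (b,j) (c,l)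
        = ∑ l, ∑ c : Fin (γ+1),
            (if (c:ℕ) ≤ (a:ℕ) then (H i l).coeff ((a:ℕ)-(c:ℕ)) else 0) *
            (if (b:ℕ) ≤ (c:ℕ) then (G j l).coeff ((c:ℕ)-(b:ℕ)) else 0) := by
          rw [Finset.sum_comm]
          exact Finset.sum_congr rfl fun l _ => Finset.sum_congr rfl fun c _ => by
            rw [hHs, hGs]
      _ = ∑ l, (if (b:ℕ) ≤ (a:ℕ) then ((H i l) * (G j l)).coeff ((a:ℕ)-(b:ℕ)) else 0) :=
          Finset.sum_congr rfl fun l _ => conv_aux _ _ a b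
      _ = 0 := by
          by_cases hba : (b:ℕ) ≤ (a:ℕ)
          · simp only [if_pos hba, ← Polynomial.finset_sum_coeff]
            rw [HGt]
            simp
          · simp [hba]
  have part2 : Hs.rank = (n - k) * (γ + 1) := by
    set H0 : Matrix (Fin (n-k)) (Fin n) F := H.map fun p => p.coeff 0 with hH0def
    have liH0 : LinearIndependent F (fun i => H0 i) := by
      rw [linearIndependent_iff_card_eq_finrank_span, Fintype.card_fin]
      have e : Set.finrank F (Set.range fun i => H0 i) = H0.rank := by
        rw [Matrix.rank_eq_finrank_span_row]; rfl
      rw [e, hH0]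
    have liHs : LinearIndependent F (fun r => Hs r) := by
      rw [Fintype.linearIndependent_iff]
      intro g hg
      have hg' : ∀ (b : Fin (γ+1)) (j : Fin n),
          (∑ r : Fin (γ+1) × Fin (n-k), g r * Hs r (b, j)) = 0 := by
        intro b j
        have := congr_fun hg (b, j)
        simpa [Finset.sum_apply] using this
      have key : ∀ a : Fin (γ+1), (∀ a' : Fin (γ+1), (a:ℕ) < (a':ℕ) → ∀ i, g (a', i) = 0) →
          ∀ i, g (a, i) = 0 := by
        intro a ih
        have h0 : ∀ j, (∑ i, g (a, i) * H0 i j) = 0 := by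
          intro j
          have hsum := hg' a j
          rw [Fintype.sum_prod_type] at hsum
          rw [Finset.sum_eq_single a (fun a' _ hne => ?_) (fun h => absurd (Finset.mem_univ a) h)]
            at hsum
          · rw [← hsum]
            refine Finset.sum_congr rfl fun i _ => ?_
            rw [hHs]
            simp [H0]
          · rcases lt_or_gt_of_ne (fun h : (a':ℕ) = (a:ℕ) => hne (Fin.ext h)) with h | h
            · refine Finset.sum_eq_zero fun i _ => ?_
              rw [hHs, if_neg (by omega), mul_zero]
            · refine Finset.sum_eq_zero fun i _ => ?_
              rw [ih a' h i, zero_mul]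
        have := Fintype.linearIndependent_iff.mp liH0 (fun i => g (a, i)) ?_
        · exact this
        · funext j
          simpa [Finset.sum_apply] using h0 j
      have main : ∀ d : ℕ, ∀ a : Fin (γ+1), γ - d ≤ (a:ℕ) → ∀ i, g (a, i) = 0 := by
        intro d
        induction d with
        | zero =>
          intro a ha i
          exact key a (fun a' ha' i' => ((by have := a'.isLt; omega : False)).elim) i
        | succ d ihd =>
          intro a ha i
          exact key a (fun a' ha' i' => ihd a' (by omega) i') i
      exact fun r => main γ r.1 (by omega) r.2
    rw [liHs.rank_matrix]
    simp [mul_comm]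
  have liGs : LinearIndependent F (fun r => Gs r) := by
    set G0 : Matrix (Fin k) (Fin n) F := G.map fun p => p.coeff 0 with hG0def
    have liG0 : LinearIndependent F (fun i => G0 i) := by
      rw [Fintype.linearIndependent_iff]
      intro lam hlam
      have hlam' : ∀ j, (∑ i, lam i * (G i j).coeff 0) = 0 := by
        intro j
        have := congr_fun hlam j
        simpa [Finset.sum_apply, G0] using this
      set c : Fin n → Polynomial F := fun j => ∑ i, Polynomial.C (lam i) * G i j with hc
      have hcmem : H *ᵥ c = 0 := (hker c).mp ⟨fun i => Polynomial.C (lam i), by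
        ext j; simp [vecMul, dotProduct, hc]⟩
      have hc0 : ∀ j, (c j).coeff 0 = 0 := by
        intro j
        simp only [hc, Polynomial.finset_sum_coeff, Polynomial.coeff_C_mul]
        exact hlam' j
      have hdiv : ∀ j, c j = Polynomial.X * (c j).divX := by
        intro j
        conv_lhs => rw [← Polynomial.divX_mul_X_add (c j)]
        rw [hc0, map_zero, add_zero, mul_comm]
      set c' : Fin n → Polynomial F := fun j => (c j).divX with hc'def
      have hcmem' : H *ᵥ c' = 0 := by
        funext r
        have h1 := congr_fun hcmem r
        simp only [mulVec, dotProduct, Pi.zero_apply] at h1 ⊢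
        have h2 : Polynomial.X * (∑ j, H r j * c' j) = 0 := by
          rw [Finset.mul_sum, ← h1]
          refine Finset.sum_congr rfl fun j _ => ?_
          rw [hdiv j]; ring
        exact (mul_eq_zero.mp h2).resolve_left Polynomial.X_ne_zero
      obtain ⟨m', hm'⟩ := (hker c').mpr hcmem'
      have hinj : Function.Injective G.vecMul := Matrix.vecMul_injective_iff.mpr hGrank
      have heq : (fun i => Polynomial.C (lam i)) ᵥ* G = (fun i => Polynomial.X * m' i) ᵥ* G := by
        funext j
        show ∑ i, Polynomial.C (lam i) * G i j = ∑ i, (Polynomial.X * m' i) * G i j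
        calc ∑ i, Polynomial.C (lam i) * G i j = c j := rfl
          _ = Polynomial.X * c' j := hdiv j
          _ = Polynomial.X * ∑ i, m' i * G i j := by
              rw [show (∑ i, m' i * G i j) = c' j from congr_fun hm' j]
          _ = ∑ i, (Polynomial.X * m' i) * G i j := by
              rw [Finset.mul_sum]; exact Finset.sum_congr rfl fun i _ => by ring
      have hCX := hinj heq
      intro i
      have hCi := congr_fun hCX i
      have := congr_arg (fun p => Polynomial.coeff p 0) hCi
      simpa using this
    -- now Gs
    rw [Fintype.linearIndependent_iff]
    intro g hg
    have hg' : ∀ (b : Fin (γ+1)) (j : Fin n),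
        (∑ r : Fin (γ+1) × Fin k, g r * Gs r (b, j)) = 0 := by
      intro b j
      have := congr_fun hg (b, j)
      simpa [Finset.sum_apply] using this
    have key : ∀ a : Fin (γ+1), (∀ a' : Fin (γ+1), (a':ℕ) < (a:ℕ) → ∀ i, g (a', i) = 0) →
        ∀ i, g (a, i) = 0 := by
      intro a ih
      have h0 : ∀ j, (∑ i, g (a, i) * G0 i j) = 0 := by
        intro j
        have hsum := hg' a j
        rw [Fintype.sum_prod_type] at hsum
        rw [Finset.sum_eq_single a (fun a' _ hne => ?_) (fun h => absurd (Finset.mem_univ a) h)]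
          at hsum
        · rw [← hsum]
          refine Finset.sum_congr rfl fun i _ => ?_
          rw [hGs]
          simp [G0]
        · rcases lt_or_gt_of_ne (fun h : (a':ℕ) = (a:ℕ) => hne (Fin.ext h)) with h | h
          · refine Finset.sum_eq_zero fun i _ => ?_
            rw [ih a' h i, zero_mul]
          · refine Finset.sum_eq_zero fun i _ => ?_
            rw [hGs, if_neg (by omega), mul_zero]
      have := Fintype.linearIndependent_iff.mp liG0 (fun i => g (a, i)) ?_
      · exact this
      · funext j
        simpa [Finset.sum_apply] using h0 j
    have main : ∀ d : ℕ, ∀ a : Fin (γ+1), (a:ℕ) ≤ d → ∀ i, g (a, i) = 0 := by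
      intro d
      induction d with
      | zero =>
        intro a ha i
        exact key a (fun a' ha' i' => (by omega : False).elim) i
      | succ d ihd =>
        intro a ha i
        exact key a (fun a' ha' i' => ihd a' (by omega) i') i
    exact fun r => main γ r.1 (by have := r.1.isLt; omega) r.2
  refine ⟨part1, part2, ?_⟩
  have hle : LinearMap.range Gs.vecMulLinear ≤ LinearMap.ker Hs.mulVecLin := by
    rintro x ⟨m, rfl⟩
    simp only [LinearMap.mem_ker, Matrix.mulVecLin_apply, Matrix.vecMulLinear_apply]
    rw [← Matrix.mulVec_transpose, Matrix.mulVec_mulVec, part1, Matrix.zero_mulVec]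
  have hrange : Module.finrank F (LinearMap.range Gs.vecMulLinear) = k * (γ+1) := by
    rw [LinearMap.finrank_range_of_inj]
    · simp [mul_comm]
    · intro x y hxy
      exact Matrix.vecMul_injective_iff.mpr liGs hxy
  have hkerdim : Module.finrank F (LinearMap.ker Hs.mulVecLin) = k * (γ+1) := by
    have hrn := LinearMap.finrank_range_add_finrank_ker (Hs.mulVecLin)
    have h1 : Module.finrank F (LinearMap.range Hs.mulVecLin) = (n-k)*(γ+1) := part2
    have h2 : Module.finrank F ((Fin (γ+1) × Fin n) → F) = (n-k)*(γ+1) + k*(γ+1) := by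
      rw [← add_mul, Nat.sub_add_cancel hkn]
      simp [mul_comm]
    rw [h1, h2] at hrn
    omega
  have hEq : LinearMap.range Gs.vecMulLinear = LinearMap.ker Hs.mulVecLin :=
    Submodule.eq_of_le_of_finrank_le hle (by rw [hrange, hkerdim])
  intro v
  constructor
  · intro hv
    have hv' : v ∈ LinearMap.ker Hs.mulVecLin := hv
    rw [← hEq] at hv'
    obtain ⟨m, hm⟩ := hv'
    exact ⟨m, hm⟩
  · rintro ⟨m, rfl⟩
    exact hle ⟨m, rfl⟩
end

section
/- Let H(A,B,b,l) = C(B,b)^{-1} Σ_{i=l}^{b} C(A,i)C(B−A,b−i) be the upper tail of a hypergeometric distribution, and write l = (A/B + α)b with α > 0. Then H(A,B,b,l) ≤ exp(−2α²b). -/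
/-!
Chvátal's argument. For `t ≥ 1`, expanding `tⁱ = ∑ⱼ C(i,j) (t-1)ʲ` and summing against the
hypergeometric weights turns `∑ᵢ C(A,i) C(C,b-i) tⁱ` into `∑ⱼ C(A,j) C(A+C-j,b-j) (t-1)ʲ`;
since `C(A,j) ≤ C(A+C,j) pʲ` with `p = A/(A+C)`, this is at most `C(A+C,b) (1 + (t-1)p)ᵇ`, the
binomial moment generating function. Hoeffding's lemma for a Bernoulli(p) variable bounds
`1 + (eˢ-1)p` by `exp(ps + s²/8)`, and Markov's inequality with `t = eˢ`, `s = 4α` gives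
`exp(b(ps + s²/8) - s(p+α)b) = exp(-2α²b)`.
-/

open Finset Real

namespace Nat

theorem descFactorial_mul_pow_le_descFactorial_mul_pow {A B : ℕ} (h : A ≤ B) (j : ℕ) :
    A.descFactorial j * B ^ j ≤ B.descFactorial j * A ^ j := by
  induction j with
  | zero => simp
  | succ j ih =>
    have hstep : (A - j) * B ≤ (B - j) * A := by
      rw [Nat.sub_mul, Nat.sub_mul, Nat.mul_comm A B]
      exact Nat.sub_le_sub_left (Nat.mul_le_mul_left j h) _
    calc A.descFactorial (j + 1) * B ^ (j + 1)
        = ((A - j) * B) * (A.descFactorial j * B ^ j) := by rw [descFactorial_succ]; ring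
      _ ≤ ((B - j) * A) * (B.descFactorial j * A ^ j) := Nat.mul_le_mul hstep ih
      _ = B.descFactorial (j + 1) * A ^ (j + 1) := by rw [descFactorial_succ]; ring

theorem choose_mul_pow_le_choose_mul_pow {A B : ℕ} (h : A ≤ B) (j : ℕ) :
    A.choose j * B ^ j ≤ B.choose j * A ^ j := by
  have := descFactorial_mul_pow_le_descFactorial_mul_pow h j
  simp only [descFactorial_eq_factorial_mul_choose, Nat.mul_assoc] at this
  exact Nat.le_of_mul_le_mul_left this j.factorial_pos

theorem sum_range_choose_mul_choose_mul_choose (A C : ℕ) {b j : ℕ} (hj : j ≤ b) :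
    ∑ i ∈ range (b + 1), A.choose i * C.choose (b - i) * i.choose j
      = A.choose j * (A - j + C).choose (b - j) := by
  have hsplit : b + 1 = j + (b - j + 1) := by omega
  rw [hsplit, sum_range_add, sum_eq_zero fun i hi => by
      rw [choose_eq_zero_of_lt (mem_range.1 hi), Nat.mul_zero], Nat.zero_add,
    add_choose_eq, Finset.Nat.sum_antidiagonal_eq_sum_range_succ_mk, mul_sum]
  refine sum_congr rfl fun k _ => ?_
  rw [Nat.mul_right_comm, choose_mul (Nat.le_add_right j k), Nat.add_sub_cancel_left,
    Nat.sub_add_eq]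
  ring

end Nat

theorem choose_le_choose_add_mul_div_pow (A C j : ℕ) :
    (A.choose j : ℝ) ≤ (A + C).choose j * ((A : ℝ) / (A + C)) ^ j := by
  rcases Nat.eq_zero_or_pos (A + C) with h | h
  · obtain ⟨rfl, rfl⟩ : A = 0 ∧ C = 0 := by omega
    cases j <;> simp
  · have hpos : (0 : ℝ) < A + C := by exact_mod_cast h
    rw [div_pow, mul_div_assoc', le_div_iff₀ (by positivity)]
    exact_mod_cast Nat.choose_mul_pow_le_choose_mul_pow (Nat.le_add_right A C) j

theorem choose_mul_choose_sub_add_le (A C : ℕ) {b j : ℕ} (hj : j ≤ b) :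
    (A.choose j : ℝ) * (A - j + C).choose (b - j)
      ≤ (A + C).choose b * b.choose j * ((A : ℝ) / (A + C)) ^ j := by
  rcases lt_or_ge A j with hAj | hjA
  · rw [Nat.choose_eq_zero_of_lt hAj, Nat.cast_zero, zero_mul]
    positivity
  · have hid : (A + C).choose b * b.choose j = (A + C).choose j * (A - j + C).choose (b - j) := by
      rw [Nat.choose_mul hj, Nat.sub_add_comm hjA]
    calc (A.choose j : ℝ) * (A - j + C).choose (b - j)
        ≤ (A + C).choose j * ((A : ℝ) / (A + C)) ^ j * (A - j + C).choose (b - j) := by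
          gcongr
          exact choose_le_choose_add_mul_div_pow A C j
      _ = (A + C).choose b * b.choose j * ((A : ℝ) / (A + C)) ^ j := by
          rw [mul_right_comm, ← Nat.cast_mul, ← hid, Nat.cast_mul]

theorem sum_choose_mul_choose_mul_pow_le (A C b : ℕ) {t : ℝ} (ht : 1 ≤ t) :
    ∑ i ∈ range (b + 1), (A.choose i : ℝ) * C.choose (b - i) * t ^ i
      ≤ (A + C).choose b * (1 + (t - 1) * (A / (A + C))) ^ b := by
  obtain ⟨u, hu, rfl⟩ : ∃ u, 0 ≤ u ∧ t = 1 + u := ⟨t - 1, by linarith, by ring⟩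
  have hexpand : ∀ i ∈ range (b + 1),
      (1 + u) ^ i = ∑ j ∈ range (b + 1), (i.choose j : ℝ) * u ^ j := by
    intro i hi
    calc (1 + u) ^ i = ∑ j ∈ range (i + 1), (i.choose j : ℝ) * u ^ j := by
          rw [add_comm, add_pow]
          simp only [one_pow, mul_one, mul_comm]
      _ = ∑ j ∈ range (b + 1), (i.choose j : ℝ) * u ^ j := by
          refine sum_subset (range_subset_range.2 (mem_range.1 hi)) fun j _ hj => ?_
          rw [Nat.choose_eq_zero_of_lt (by simpa using hj), Nat.cast_zero, zero_mul]
  calc ∑ i ∈ range (b + 1), (A.choose i : ℝ) * C.choose (b - i) * (1 + u) ^ i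
      = ∑ j ∈ range (b + 1),
          ((∑ i ∈ range (b + 1), A.choose i * C.choose (b - i) * i.choose j : ℕ) : ℝ) * u ^ j := by
        rw [sum_congr rfl fun i hi => by rw [hexpand i hi, mul_sum], sum_comm]
        push_cast [sum_mul]
        simp only [mul_assoc]
    _ = ∑ j ∈ range (b + 1), (A.choose j : ℝ) * (A - j + C).choose (b - j) * u ^ j := by
        refine sum_congr rfl fun j hj => ?_
        rw [Nat.sum_range_choose_mul_choose_mul_choose A C (mem_range_succ_iff.1 hj)]
        push_cast
        rfl
    _ ≤ ∑ j ∈ range (b + 1), (A + C).choose b * b.choose j * ((A : ℝ) / (A + C)) ^ j * u ^ j :=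
        sum_le_sum fun j hj => mul_le_mul_of_nonneg_right
          (choose_mul_choose_sub_add_le A C (mem_range_succ_iff.1 hj)) (pow_nonneg hu j)
    _ = (A + C).choose b * (1 + (1 + u - 1) * (A / (A + C))) ^ b := by
        rw [add_sub_cancel_left, add_comm 1, add_pow, mul_sum]
        exact sum_congr rfl fun j _ => by ring

open MeasureTheory ProbabilityTheory in
theorem one_sub_add_mul_exp_le_exp {p : ℝ} (hp0 : 0 ≤ p) (hp1 : p ≤ 1) (s : ℝ) :
    1 - p + p * exp s ≤ exp (p * s + s ^ 2 / 8) := by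
  set μ : Measure ℝ := Ber((1 : ℝ), 0, ⟨p, hp0, hp1⟩)
  have hmean : μ[id] = p := by simp [μ, integral_bernoulliMeasure]
  have hsupp : ∀ᵐ x ∂μ, x ∈ Set.Icc (0 : ℝ) 1 := by
    rw [ae_iff]
    simp only [Set.mem_Icc, not_and_or, not_le]
    exact bernoulliMeasure_apply_of_notMem_of_notMem _ (by measurability)
      (by norm_num) (by norm_num)
  have hoeffding := (hasSubgaussianMGF_of_mem_Icc aemeasurable_id hsupp).mgf_le s
  rw [mgf, integral_bernoulliMeasure, hmean] at hoeffding
  norm_num at hoeffding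
  calc 1 - p + p * exp s = exp (p * s) * (p * exp (s * (1 - p)) + (1 - p) * exp (-(s * p))) := by
        rw [mul_add, mul_left_comm, ← exp_add, mul_left_comm, ← exp_add]
        ring_nf
        rw [exp_zero]; ring
    _ ≤ exp (p * s) * exp (1 / 4 * s ^ 2 / 2) := by gcongr
    _ = exp (p * s + s ^ 2 / 8) := by rw [← exp_add]; ring_nf

theorem sum_Icc_le_sum_range_mul_pow_div {f : ℕ → ℝ} (hf : ∀ i, 0 ≤ f i) {t : ℝ} (ht : 1 ≤ t)
    (l b : ℕ) : ∑ i ∈ Icc l b, f i ≤ (∑ i ∈ range (b + 1), f i * t ^ i) / t ^ l := by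
  rw [le_div_iff₀ (by positivity), sum_mul]
  calc ∑ i ∈ Icc l b, f i * t ^ l ≤ ∑ i ∈ Icc l b, f i * t ^ i :=
        sum_le_sum fun i hi =>
          mul_le_mul_of_nonneg_left (pow_le_pow_right₀ ht (mem_Icc.1 hi).1) (hf i)
    _ ≤ ∑ i ∈ range (b + 1), f i * t ^ i :=
        sum_le_sum_of_subset_of_nonneg (fun i hi => mem_range_succ_iff.2 (mem_Icc.1 hi).2)
          fun i _ _ => mul_nonneg (hf i) (by positivity)

theorem sum_Icc_choose_mul_choose_le (A C b l : ℕ) {s : ℝ} (hs : 0 ≤ s) :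
    ∑ i ∈ Icc l b, (A.choose i : ℝ) * C.choose (b - i)
      ≤ (A + C).choose b * exp ((A / (A + C) * s + s ^ 2 / 8) * b - s * l) := by
  set p : ℝ := A / (A + C)
  have hp0 : 0 ≤ p := by positivity
  have hp1 : p ≤ 1 := div_le_one_of_le₀ (le_add_of_nonneg_right C.cast_nonneg) (by positivity)
  have ht : 1 ≤ exp s := one_le_exp hs
  have hbase : 1 + (exp s - 1) * p ≤ exp (p * s + s ^ 2 / 8) := by
    linarith [one_sub_add_mul_exp_le_exp hp0 hp1 s]
  calc ∑ i ∈ Icc l b, (A.choose i : ℝ) * C.choose (b - i)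
      ≤ (∑ i ∈ range (b + 1), (A.choose i : ℝ) * C.choose (b - i) * exp s ^ i) / exp s ^ l :=
        sum_Icc_le_sum_range_mul_pow_div (fun i => by positivity) ht l b
    _ ≤ (A + C).choose b * (1 + (exp s - 1) * p) ^ b / exp s ^ l := by
        gcongr
        exact sum_choose_mul_choose_mul_pow_le A C b ht
    _ ≤ (A + C).choose b * exp (p * s + s ^ 2 / 8) ^ b / exp s ^ l := by
        have := add_nonneg zero_le_one (mul_nonneg (sub_nonneg.2 ht) hp0)
        gcongr
    _ = (A + C).choose b * exp ((p * s + s ^ 2 / 8) * b - s * l) := by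
        rw [← exp_nat_mul, ← exp_nat_mul, mul_div_assoc, ← exp_sub]
        ring_nf

theorem stmt15_general (A B b l : ℕ) (hAB : A ≤ B)
    (α : ℝ) (hα : 0 < α) (hl : (l : ℝ) = ((A : ℝ) / (B : ℝ) + α) * (b : ℝ)) :
    (∑ i ∈ Finset.Icc l b, ((A.choose i : ℝ) * ((B - A).choose (b - i) : ℝ)))
        / (B.choose b : ℝ)
      ≤ Real.exp (-2 * α ^ 2 * (b : ℝ)) := by
  obtain ⟨C, rfl⟩ := Nat.exists_eq_add_of_le hAB
  rw [Nat.add_sub_cancel_left]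
  refine div_le_of_le_mul₀ (by positivity) (by positivity) ?_
  calc _ ≤ (A + C).choose b * exp ((A / (A + C) * (4 * α) + (4 * α) ^ 2 / 8) * b - 4 * α * l) :=
        sum_Icc_choose_mul_choose_le A C b l (by positivity)
    _ = exp (-2 * α ^ 2 * b) * (A + C).choose b := by
        rw [hl, mul_comm]
        push_cast
        ring_nf

/-- Chvátal's tail bound for the hypergeometric distribution:
H(A,B,b,l) ≤ exp(-2α²b) when l = (A/B + α)b with α > 0. -/
theorem stmt15 (A B b l : ℕ) (hAB : A ≤ B) (hbB : b ≤ B) (hB : 0 < B)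
    (α : ℝ) (hα : 0 < α) (hl : (l : ℝ) = ((A : ℝ) / (B : ℝ) + α) * (b : ℝ)) :
    (∑ i ∈ Finset.Icc l b, ((A.choose i : ℝ) * ((B - A).choose (b - i) : ℝ)))
        / (B.choose b : ℝ)
      ≤ Real.exp (-2 * α ^ 2 * (b : ℝ)) :=
  stmt15_general A B b l hAB α hα hl
end

section
/- Let e ∈ F_q^N be fixed of Hamming weight t_e, and let c be drawn uniformly at random from the vectors of F_q^N of Hamming weight t_c. Then the probability that wt(e + c) = wt(e) equals Σ_{z=0}^{⌊t_c/2⌋} [C(t_e,z) · C(N−t_e,z) · C(t_e−z, t_c−2z) · (q−2)^{t_c−2z}] / [C(N,t_c) · (q−1)^{t_c−z}]. -/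
/-!
Sort the positions of `c` by how `c i` meets `e i`: cancelling (`e i ≠ 0`, `c i = -e i`),
overlapping (`e i ≠ 0`, `c i ∉ {0, -e i}`) and outer (`e i = 0 ≠ c i`). Then
`wt c = #cancel + #overlap + #outer` and `wt (e + c) + #cancel = wt e + #outer`, so `c` preserves
the weight of `e` exactly when it has as many outer as cancelling positions, say `z`, and then
`#overlap = t_c - 2z`. The vectors with a prescribed triple of position sets form a box with
`(q - 2) ^ #overlap * (q - 1) ^ #outer` points, and there are
`C(t_e, z) * C(t_e - z, t_c - 2z) * C(N - t_e, z)` admissible triples.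
-/

open Finset Fintype

namespace WeightPreserving

lemma card_filter_disjoint_powersetCard_product {α : Type*} [DecidableEq α] (s : Finset α)
    (a b : ℕ) :
    #{p ∈ s.powersetCard a ×ˢ s.powersetCard b | Disjoint p.1 p.2}
      = (#s).choose a * (#s - a).choose b := by
  rw [card_filter, sum_product, ← smul_eq_mul, ← card_powersetCard, ← sum_const]
  refine sum_congr rfl fun A hA => ?_
  have hdisj : {D ∈ s.powersetCard b | Disjoint A D} = (s \ A).powersetCard b := by
    ext D
    simp only [mem_filter, mem_powersetCard, subset_sdiff]
    tauto
  rw [← card_filter, hdisj, card_powersetCard, card_sdiff_of_subset (mem_powersetCard.mp hA).1,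
    (mem_powersetCard.mp hA).2]

variable {ι F : Type*} [Fintype ι] [AddGroup F] [DecidableEq F]

def hammingSupport (e : ι → F) : Finset ι := {i | e i ≠ 0}

def cancelSet (e c : ι → F) : Finset ι := {i | e i ≠ 0 ∧ c i = -e i}

def overlapSet (e c : ι → F) : Finset ι := {i | e i ≠ 0 ∧ c i ≠ 0 ∧ c i ≠ -e i}

def outerSet (e c : ι → F) : Finset ι := {i | e i = 0 ∧ c i ≠ 0}

def profile (e c : ι → F) : (Finset ι × Finset ι) × Finset ι :=
  ((cancelSet e c, overlapSet e c), outerSet e c)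

lemma hammingNorm_eq_card_cancelSet_add (e c : ι → F) :
    hammingNorm c = #(cancelSet e c) + #(overlapSet e c) + #(outerSet e c) := by
  simp only [hammingNorm, cancelSet, overlapSet, outerSet, card_filter, ← sum_add_distrib]
  refine sum_congr rfl fun i _ => ?_
  by_cases he : e i = 0 <;> by_cases hc : c i = 0 <;> by_cases hce : c i = -e i <;>
    simp_all

lemma hammingNorm_add_add_card_cancelSet (e c : ι → F) :
    hammingNorm (e + c) + #(cancelSet e c) = hammingNorm e + #(outerSet e c) := by
  simp only [hammingNorm, cancelSet, outerSet, card_filter, ← sum_add_distrib, Pi.add_apply,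
    Ne, add_eq_zero_iff_eq_neg']
  refine sum_congr rfl fun i _ => ?_
  by_cases he : e i = 0 <;> by_cases hce : c i = -e i <;> simp_all

lemma cancelSet_subset (e c : ι → F) : cancelSet e c ⊆ hammingSupport e :=
  monotone_filter_right _ fun _ _ h => h.1

lemma overlapSet_subset (e c : ι → F) : overlapSet e c ⊆ hammingSupport e :=
  monotone_filter_right _ fun _ _ h => h.1

lemma disjoint_cancelSet_overlapSet (e c : ι → F) :
    Disjoint (cancelSet e c) (overlapSet e c) :=
  disjoint_filter.mpr fun _ _ h h' => h'.2.2 h.2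

variable [DecidableEq ι]

lemma outerSet_subset (e c : ι → F) : outerSet e c ⊆ (hammingSupport e)ᶜ := by
  intro i
  simp only [outerSet, hammingSupport, mem_compl, mem_filter, mem_univ, true_and]
  tauto

def admissibleProfiles (e : ι → F) (z k : ℕ) :
    Finset ((Finset ι × Finset ι) × Finset ι) :=
  {p ∈ (hammingSupport e).powersetCard z ×ˢ (hammingSupport e).powersetCard k |
    Disjoint p.1 p.2} ×ˢ (hammingSupport e)ᶜ.powersetCard z

lemma card_admissibleProfiles (e : ι → F) (z k : ℕ) :
    #(admissibleProfiles e z k) = (hammingNorm e).choose z * (hammingNorm e - z).choose k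
      * (card ι - hammingNorm e).choose z := by
  rw [admissibleProfiles, card_product, card_filter_disjoint_powersetCard_product,
    card_powersetCard, card_compl]
  rfl

variable [Fintype F]

def allowedValues (e : ι → F) (A D B : Finset ι) (i : ι) : Finset F :=
  if i ∈ A then {-e i} else if i ∈ D then {0, -e i}ᶜ else if i ∈ B then {0}ᶜ else {0}

variable {e : ι → F} {A D B : Finset ι}

lemma filter_profile_eq (hA : A ⊆ hammingSupport e) (hD : D ⊆ hammingSupport e)
    (hAD : Disjoint A D) (hB : B ⊆ (hammingSupport e)ᶜ) :
    ({c | profile e c = ((A, D), B)} : Finset (ι → F)) = piFinset (allowedValues e A D B) := by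
  ext c
  simp only [profile, cancelSet, overlapSet, outerSet, Prod.mk.injEq, Finset.ext_iff,
    mem_filter, mem_univ, true_and, ← forall_and, mem_piFinset]
  refine forall_congr' fun i => ?_
  simp only [hammingSupport, subset_iff, mem_compl, mem_filter, mem_univ, true_and] at hA hD hB
  by_cases hiA : i ∈ A
  · have hiD : i ∉ D := disjoint_left.mp hAD hiA
    have hiB : i ∉ B := fun hiB => hB hiB (hA hiA)
    simp +contextual [allowedValues, hiA, hiD, hiB, hA hiA]
  by_cases hiD : i ∈ D
  · have hiB : i ∉ B := fun hiB => hB hiB (hD hiD)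
    simp [allowedValues, hiA, hiD, hiB, hD hiD]
  by_cases hiB : i ∈ B
  · simp [allowedValues, hiA, hiD, hiB, not_not.mp (hB hiB)]
  by_cases he : e i = 0 <;> by_cases hc : c i = 0 <;> simp [allowedValues, hiA, hiD, hiB, he, hc]

lemma card_allowedValues (hA : A ⊆ hammingSupport e) (hD : D ⊆ hammingSupport e)
    (hAD : Disjoint A D) (hB : B ⊆ (hammingSupport e)ᶜ) (i : ι) :
    #(allowedValues e A D B i)
      = (if i ∈ D then card F - 2 else 1) * (if i ∈ B then card F - 1 else 1) := by
  simp only [hammingSupport, subset_iff, mem_compl, mem_filter, mem_univ, true_and] at hA hD hB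
  by_cases hiA : i ∈ A
  · have hiD : i ∉ D := disjoint_left.mp hAD hiA
    have hiB : i ∉ B := fun hiB => hB hiB (hA hiA)
    simp [allowedValues, hiA, hiD, hiB]
  by_cases hiD : i ∈ D
  · have hiB : i ∉ B := fun hiB => hB hiB (hD hiD)
    simp only [allowedValues, hiA, hiD, hiB, if_false, if_true, mul_one]
    rw [card_compl, card_pair (neg_ne_zero.mpr (hD hiD)).symm]
  by_cases hiB : i ∈ B <;> simp [allowedValues, hiA, hiD, hiB, card_compl]

lemma card_filter_profile_eq (hA : A ⊆ hammingSupport e) (hD : D ⊆ hammingSupport e)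
    (hAD : Disjoint A D) (hB : B ⊆ (hammingSupport e)ᶜ) :
    #({c | profile e c = ((A, D), B)} : Finset (ι → F))
      = (card F - 2) ^ #D * (card F - 1) ^ #B := by
  rw [filter_profile_eq hA hD hAD hB, card_piFinset,
    prod_congr rfl fun i _ => card_allowedValues hA hD hAD hB i, prod_mul_distrib,
    Fintype.prod_ite_mem, Fintype.prod_ite_mem, prod_const, prod_const]

def weightPreserving (e : ι → F) (tc : ℕ) : Finset (ι → F) :=
  {c | hammingNorm c = tc ∧ hammingNorm (e + c) = hammingNorm e}

lemma profile_mem_admissibleProfiles_iff (e c : ι → F) {tc z : ℕ} (hz : 2 * z ≤ tc) :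
    profile e c ∈ admissibleProfiles e z (tc - 2 * z)
      ↔ c ∈ weightPreserving e tc ∧ #(cancelSet e c) = z := by
  have hc := hammingNorm_eq_card_cancelSet_add e c
  have hec := hammingNorm_add_add_card_cancelSet e c
  simp only [profile, admissibleProfiles, weightPreserving, mem_product, mem_filter,
    mem_powersetCard, mem_univ, true_and, cancelSet_subset, overlapSet_subset, outerSet_subset,
    disjoint_cancelSet_overlapSet, and_true]
  omega

lemma card_filter_card_cancelSet_eq (e : ι → F) {tc z : ℕ} (hz : 2 * z ≤ tc) :
    #{c ∈ weightPreserving e tc | #(cancelSet e c) = z}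
      = #(admissibleProfiles e z (tc - 2 * z))
        * ((card F - 2) ^ (tc - 2 * z) * (card F - 1) ^ z) := by
  rw [card_eq_sum_card_fiberwise (f := profile e) (t := admissibleProfiles e z (tc - 2 * z))
    fun c hc => (profile_mem_admissibleProfiles_iff e c hz).mpr (mem_filter.mp hc)]
  refine sum_const_nat fun p hp => ?_
  obtain ⟨⟨A, D⟩, B⟩ := p
  have hfiber : {c ∈ {c ∈ weightPreserving e tc | #(cancelSet e c) = z} |
      profile e c = ((A, D), B)} = ({c | profile e c = ((A, D), B)} : Finset (ι → F)) := by
    ext c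
    simp only [mem_filter, mem_univ, true_and, and_iff_right_iff_imp]
    intro hc
    exact (profile_mem_admissibleProfiles_iff e c hz).mp (hc ▸ hp)
  simp only [admissibleProfiles, mem_product, mem_filter, mem_powersetCard] at hp
  obtain ⟨⟨⟨⟨hA, -⟩, hD, hDcard⟩, hAD⟩, hB, hBcard⟩ := hp
  rw [hfiber, card_filter_profile_eq hA hD hAD hB, hDcard, hBcard]

theorem card_weightPreserving (e : ι → F) (tc : ℕ) :
    #(weightPreserving e tc) = ∑ z ∈ range (tc / 2 + 1),
      (hammingNorm e).choose z * (card ι - hammingNorm e).choose z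
        * (hammingNorm e - z).choose (tc - 2 * z) * (card F - 2) ^ (tc - 2 * z)
        * (card F - 1) ^ z := by
  rw [card_eq_sum_card_fiberwise (f := fun c => #(cancelSet e c)) (t := range (tc / 2 + 1))]
  · refine sum_congr rfl fun z hz => ?_
    rw [card_filter_card_cancelSet_eq e (by grind : 2 * z ≤ tc), card_admissibleProfiles]
    ring
  · intro c hc
    simp only [weightPreserving, coe_filter, mem_univ, true_and, Set.mem_ofPred_eq] at hc
    have := hammingNorm_eq_card_cancelSet_add e c
    have := hammingNorm_add_add_card_cancelSet e c
    simp only [coe_range, Set.mem_Iio]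
    omega

end WeightPreserving

/-- Probability that adding a uniformly random weight-t_c vector to a fixed weight-t_e
vector preserves the weight. -/
theorem stmt17 {F : Type*} [Field F] [Fintype F] [DecidableEq F] {N te tc : ℕ}
    (e : Fin N → F) (he : hammingNorm e = te) :
    ((Finset.univ.filter (fun c : Fin N → F =>
        hammingNorm c = tc ∧ hammingNorm (e + c) = te)).card : ℚ)
        / ((N.choose tc : ℚ) * ((Fintype.card F : ℚ) - 1) ^ tc)
      = ∑ z ∈ Finset.range (tc / 2 + 1),
          ((te.choose z : ℚ) * (((N - te).choose z : ℕ) : ℚ)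
              * (((te - z).choose (tc - 2 * z) : ℕ) : ℚ)
              * ((Fintype.card F : ℚ) - 2) ^ (tc - 2 * z))
            / ((N.choose tc : ℚ) * ((Fintype.card F : ℚ) - 1) ^ (tc - z)) := by
  subst he
  have hq : 2 ≤ card F := one_lt_card
  have hq1 : (card F : ℚ) - 1 ≠ 0 :=
    sub_ne_zero.mpr (by exact_mod_cast (by omega : card F ≠ 1))
  have hcount := WeightPreserving.card_weightPreserving e tc
  rw [WeightPreserving.weightPreserving, Fintype.card_fin] at hcount
  rw [hcount]
  push_cast [Nat.cast_sub hq, Nat.cast_sub (one_le_two.trans hq)]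
  rw [sum_div]
  refine sum_congr rfl fun z hz => ?_
  rw [← pow_sub_mul_pow _ (by grind : z ≤ tc), ← mul_assoc,
    mul_div_mul_right _ _ (pow_ne_zero _ hq1)]
end
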